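/- arXiv:1708.04203 — 5 statements merged into one kernel-verified Lean document; each statement's English description precedes it below -/
import Mathlib

section
/- Let b₁, …, bₙ be open half-planes in ℝ² whose union is all of ℝ². Then there exist three of them whose union is already all of ℝ². -/
/-! The closed half-planes complementary to the given open ones are convex and have empty common
intersection, so by Helly's theorem in dimension two at most three of them already have empty
intersection; the corresponding open half-planes cover. -/

open scoped RealInnerProductSpace
open Finset Module

section Helly

variable {ι 𝕜 E : Type*} [Field 𝕜] [LinearOrder 𝕜] [IsStrictOrderedRing 𝕜]
  [AddCommGroup E] [Module 𝕜 E] [FiniteDimensional 𝕜 E]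

theorem exists_card_le_finrank_add_one_biUnion_eq_univ {U : ι → Set E} {s : Finset ι}
    (hU : ∀ i ∈ s, Convex 𝕜 (U i)ᶜ) (hcover : ⋃ i ∈ s, U i = Set.univ) :
    ∃ t ⊆ s, #t ≤ finrank 𝕜 E + 1 ∧ ⋃ i ∈ t, U i = Set.univ := by
  by_contra! h
  have : (⋂ i ∈ s, (U i)ᶜ).Nonempty := Convex.helly_theorem' hU fun t hts hcard => by
    rw [← Set.compl_iUnion₂, Set.nonempty_compl]
    exact h t hts hcard
  rw [← Set.compl_iUnion₂, hcover, Set.compl_univ] at this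
  exact Set.not_nonempty_empty this

end Helly

theorem Finset.exists_subset_insert_insert_singleton {α : Type*} [DecidableEq α] {t : Finset α}
    (ht : t.Nonempty) (hcard : #t ≤ 3) : ∃ i j k, t ⊆ {i, j, k} := by
  interval_cases h : #t
  · simp_all
  · obtain ⟨i, rfl⟩ := card_eq_one.1 h
    exact ⟨i, i, i, by simp⟩
  · obtain ⟨i, j, -, rfl⟩ := card_eq_two.1 h
    exact ⟨i, j, j, by simp⟩
  · obtain ⟨i, j, k, -, -, -, rfl⟩ := card_eq_three.1 h
    exact ⟨i, j, k, subset_rfl⟩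

theorem three_halfplanes_cover_general (n : ℕ) (a : Fin n → EuclideanSpace ℝ (Fin 2)) (c : Fin n → ℝ)
    (hcover : ∀ x : EuclideanSpace ℝ (Fin 2), ∃ i, ⟪a i, x⟫ < c i) :
    ∃ i j k : Fin n, ∀ x : EuclideanSpace ℝ (Fin 2),
      ⟪a i, x⟫ < c i ∨ ⟪a j, x⟫ < c j ∨ ⟪a k, x⟫ < c k := by
  set U : Fin n → Set (EuclideanSpace ℝ (Fin 2)) := fun i => {x | ⟪a i, x⟫ < c i}
  have hconv : ∀ i ∈ univ, Convex ℝ (U i)ᶜ := fun i _ => by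
    simpa [U, Set.compl_ofPred] using convex_halfSpace_ge (innerₛₗ ℝ (a i)).isLinear (c i)
  obtain ⟨t, -, hcard, ht⟩ := exists_card_le_finrank_add_one_biUnion_eq_univ hconv
    (Set.eq_univ_of_forall fun x => by simpa [U] using hcover x)
  rw [finrank_euclideanSpace_fin] at hcard
  have hne : t.Nonempty := by
    by_contra! rfl
    exact Set.empty_ne_univ (by simpa using ht)
  obtain ⟨i, j, k, hijk⟩ := t.exists_subset_insert_insert_singleton hne hcard
  refine ⟨i, j, k, fun x => ?_⟩
  obtain ⟨m, hm, hx⟩ := Set.mem_iUnion₂.1 (ht ▸ Set.mem_univ x)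
  have hm' : m = i ∨ m = j ∨ m = k := by simpa using hijk hm
  rcases hm' with rfl | rfl | rfl
  exacts [.inl hx, .inr (.inl hx), .inr (.inr hx)]

/-- If open half-planes `{x | ⟪a i, x⟫ < c i}` in ℝ² cover the plane,
then three of them already cover the plane. -/
theorem three_halfplanes_cover (n : ℕ) (a : Fin n → EuclideanSpace ℝ (Fin 2)) (c : Fin n → ℝ)
    (ha : ∀ i, a i ≠ 0)
    (hcover : ∀ x : EuclideanSpace ℝ (Fin 2), ∃ i, ⟪a i, x⟫ < c i) :
    ∃ i j k : Fin n, ∀ x : EuclideanSpace ℝ (Fin 2),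
      ⟪a i, x⟫ < c i ∨ ⟪a j, x⟫ < c j ∨ ⟪a k, x⟫ < c k :=
  three_halfplanes_cover_general n a c hcover
end

section
/- Let h₁, …, hₙ be closed half-spaces in ℝ³ through the origin (i.e., of the form {x : ⟪νᵢ, x⟫ ≥ 0} for nonzero vectors νᵢ), and suppose the open complements {x : ⟪νᵢ, x⟫ < 0} together cover the unit sphere S². Then there exist at most six indices i₁, …, i₆ such that the corresponding open complements already cover S². -/
/-!
The normals `ν i` span `ℝ³` (a vector orthogonal to all of them would be uncovered), so some
three of them, `b`, already span; then the cone `{x | ⟪v, x⟫ ≥ 0, v ∈ b}` meets the half-space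
`⟪m, x⟫ ≤ 0`, `m = ∑ b`, only in `0`, and every nonzero point of it rescales onto the affine
plane `⟪m, x⟫ = 1`. If no six hemispheres covered the sphere, then for any three further normals
the cone cut out by `b` and them would contain a nonzero point, hence a point of that plane.
Helly's theorem in the plane then gives a point of the plane in all half-spaces
`⟪ν i, x⟫ ≥ 0`, i.e. a direction covered by no hemisphere. In dimension `d` the same argument
gives `2 d` hemispheres.
-/

open scoped RealInnerProductSpace

open Module Submodule ProperCone Finset

theorem Convex.helly_theorem_inter_affineSubspace {ι 𝕜 E : Type*} [Field 𝕜] [LinearOrder 𝕜]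
    [IsStrictOrderedRing 𝕜] [AddCommGroup E] [Module 𝕜 E] (A : AffineSubspace 𝕜 E)
    [FiniteDimensional 𝕜 A.direction] {F : ι → Set E} {s : Finset ι}
    (h_convex : ∀ i ∈ s, Convex 𝕜 (F i))
    (h_inter : ∀ I ⊆ s, #I ≤ finrank 𝕜 A.direction + 1 →
      ((A : Set E) ∩ ⋂ i ∈ I, F i).Nonempty) :
    ((A : Set E) ∩ ⋂ i ∈ s, F i).Nonempty := by
  obtain ⟨p, hp, -⟩ := h_inter ∅ (empty_subset s) (by simp)
  let G : ι → Set A.direction := fun i ↦ A.direction.subtype ⁻¹' ((· + p) ⁻¹' F i)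
  obtain ⟨v, hv⟩ := Convex.helly_theorem' (F := G) (s := s)
    (fun i hi ↦ ((h_convex i hi).translate_preimage_left p).linear_preimage _) fun I hIs hI ↦ by
      obtain ⟨x, hxA, hx⟩ := h_inter I hIs hI
      refine ⟨⟨x - p, AffineSubspace.vsub_mem_direction hxA hp⟩, ?_⟩
      simpa [G] using hx
  exact ⟨v + p, AffineSubspace.vadd_mem_of_mem_direction v.2 hp, by simpa [G] using hv⟩

theorem eq_zero_of_span_eq_top_of_inner_eq_zero {𝕜 F : Type*} [RCLike 𝕜] [NormedAddCommGroup F]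
    [InnerProductSpace 𝕜 F] {s : Set F} (hs : span 𝕜 s = ⊤) {x : F}
    (h : ∀ v ∈ s, inner 𝕜 v x = 0) : x = 0 := by
  have hsx : span 𝕜 s ≤ (𝕜 ∙ x)ᗮ :=
    span_le.2 fun v hv ↦ mem_orthogonal_singleton_iff_inner_left.2 (h v hv)
  rwa [hs, top_le_iff, orthogonal_eq_top_iff, span_singleton_eq_bot] at hsx

section InnerProductSpace

variable {E : Type*} [NormedAddCommGroup E] [InnerProductSpace ℝ E]

/-- For `m = 0` this is all of `E`, not the empty set `{x | ⟪0, x⟫ = 1}`. -/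
noncomputable def innerHyperplane (m : E) : AffineSubspace ℝ E :=
  AffineSubspace.mk' ((‖m‖ ^ 2)⁻¹ • m) (ℝ ∙ m)ᗮ

theorem mem_innerHyperplane_iff {m : E} (hm : m ≠ 0) {x : E} :
    x ∈ innerHyperplane m ↔ ⟪m, x⟫ = 1 := by
  have hm_base : ⟪m, (‖m‖ ^ 2)⁻¹ • m⟫ = 1 := by
    rw [real_inner_smul_right, real_inner_self_eq_norm_sq, inv_mul_cancel₀ (by positivity)]
  rw [innerHyperplane, AffineSubspace.mem_mk', vsub_eq_sub,
    mem_orthogonal_singleton_iff_inner_right, inner_sub_right, hm_base, sub_eq_zero]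

theorem finrank_direction_innerHyperplane [FiniteDimensional ℝ E] {m : E} (hm : m ≠ 0) :
    finrank ℝ (innerHyperplane m).direction + 1 = finrank ℝ E := by
  rw [innerHyperplane, AffineSubspace.direction_mk', ← finrank_span_singleton (K := ℝ) hm,
    add_comm, finrank_add_finrank_orthogonal]

section CompleteSpace

variable [CompleteSpace E]

theorem innerDual_eq_bot_iff_forall_norm_eq_one {s : Set E} :
    innerDual s = ⊥ ↔ ∀ x : E, ‖x‖ = 1 → ∃ v ∈ s, ⟪v, x⟫ < 0 := by
  constructor
  · intro hs x hx
    by_contra! hxs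
    have hx_mem : x ∈ innerDual s := hxs
    rw [hs, ProperCone.mem_bot] at hx_mem
    simp [hx_mem] at hx
  · intro hcover
    refine eq_bot_iff.2 fun x hx ↦ ?_
    by_contra hx0
    obtain ⟨v, hvs, hv⟩ := hcover (‖x‖⁻¹ • x) (norm_smul_inv_norm hx0)
    rw [real_inner_smul_right] at hv
    exact hv.not_ge (mul_nonneg (by positivity) (hx hvs))

theorem eq_zero_of_mem_innerDual_of_inner_sum_nonpos {b : Finset E}
    (hb : span ℝ (b : Set E) = ⊤) {x : E} (hx : x ∈ innerDual (b : Set E))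
    (hbx : ⟪∑ v ∈ b, v, x⟫ ≤ 0) : x = 0 := by
  rw [sum_inner] at hbx
  have hzero := (sum_eq_zero_iff_of_nonneg fun v hv ↦ hx hv).1
    (hbx.antisymm (sum_nonneg fun v hv ↦ hx hv))
  exact eq_zero_of_span_eq_top_of_inner_eq_zero hb hzero

end CompleteSpace

variable [FiniteDimensional ℝ E]

theorem span_eq_top_of_innerDual_eq_bot {s : Set E} (hs : innerDual s = ⊥) : span ℝ s = ⊤ := by
  rw [← orthogonal_eq_bot_iff, eq_bot_iff]
  intro x hx
  have hx_mem : x ∈ innerDual s := fun v hv ↦ (hx v (subset_span hv)).ge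
  rw [hs, ProperCone.mem_bot] at hx_mem
  exact (Submodule.mem_bot ℝ).2 hx_mem

theorem exists_subset_card_le_two_mul_finrank_innerDual_eq_bot {s : Finset E}
    (hs : innerDual (s : Set E) = ⊥) :
    ∃ t ⊆ s, #t ≤ 2 * finrank ℝ E ∧ innerDual (t : Set E) = ⊥ := by
  classical
  by_contra! hcon
  obtain ⟨b, hbs, hbcard, hbspan, -⟩ := exists_finset_span_eq_linearIndepOn ℝ (s : Set E)
  rw [span_eq_top_of_innerDual_eq_bot hs] at hbcard hbspan
  rw [finrank_top] at hbcard
  set m := ∑ v ∈ b, v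
  have hslice : ∀ I ⊆ s, #I ≤ finrank ℝ E →
      ∃ x, ⟪m, x⟫ = 1 ∧ x ∈ innerDual ((b ∪ I : Finset E) : Set E) := by
    intro I hIs hI
    obtain ⟨y, hy, hy0⟩ : ∃ y ∈ innerDual ((b ∪ I : Finset E) : Set E), y ≠ 0 := by
      by_contra! h
      exact hcon (b ∪ I) (union_subset (mod_cast hbs) hIs) ((card_union_le _ _).trans (by omega))
        (eq_bot_iff.2 fun y hy ↦ ProperCone.mem_bot.2 (h y hy))
    have hmy : 0 < ⟪m, y⟫ := by
      by_contra! hmy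
      exact hy0 (eq_zero_of_mem_innerDual_of_inner_sum_nonpos hbspan
        (innerDual_le_innerDual (by simp) hy) hmy)
    refine ⟨⟪m, y⟫⁻¹ • y, by rw [real_inner_smul_right, inv_mul_cancel₀ hmy.ne'], ?_⟩
    exact (innerDual _).smul_mem hy (inv_nonneg.2 hmy.le)
  have hm : m ≠ 0 := by
    obtain ⟨x, hx, -⟩ := hslice ∅ (empty_subset s) (Nat.zero_le _)
    rintro hm
    simp [hm] at hx
  obtain ⟨x, hxA, hx⟩ := Convex.helly_theorem_inter_affineSubspace (innerHyperplane m)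
    (F := fun v ↦ innerDual (insert v (b : Set E))) (s := s) (fun v _ ↦ (innerDual _).convex)
    fun I hIs hI ↦ by
      obtain ⟨x, hmx, hx⟩ := hslice I hIs (by rwa [← finrank_direction_innerHyperplane hm])
      refine ⟨x, (mem_innerHyperplane_iff hm).2 hmx, Set.mem_iInter₂.2 fun v hv ↦ ?_⟩
      exact innerDual_le_innerDual (by simp [Set.insert_subset_iff, hv]) hx
  have hxs : x ∈ innerDual (s : Set E) :=
    fun v hv ↦ Set.mem_iInter₂.1 hx v hv (Set.mem_insert v _)
  rw [hs, ProperCone.mem_bot] at hxs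
  simp [hxs, mem_innerHyperplane_iff hm] at hxA

end InnerProductSpace

theorem six_hemispheres_cover_general (n : ℕ) (ν : Fin n → EuclideanSpace ℝ (Fin 3))
    (hcover : ∀ x : EuclideanSpace ℝ (Fin 3), ‖x‖ = 1 → ∃ i, ⟪ν i, x⟫ < 0) :
    ∃ S : Finset (Fin n), S.card ≤ 6 ∧
      ∀ x : EuclideanSpace ℝ (Fin 3), ‖x‖ = 1 → ∃ i ∈ S, ⟪ν i, x⟫ < 0 := by
  classical
  have hs : innerDual ((univ.image ν : Finset _) : Set (EuclideanSpace ℝ (Fin 3))) = ⊥ :=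
    innerDual_eq_bot_iff_forall_norm_eq_one.2 (by simpa using hcover)
  obtain ⟨t, hts, htcard, ht⟩ := exists_subset_card_le_two_mul_finrank_innerDual_eq_bot hs
  obtain ⟨S, -, hSinj, rfl⟩ := exists_subset_injOn_image_eq_of_surjOn Set.univ t
    fun v hv ↦ by simpa using hts hv
  refine ⟨S, ?_, ?_⟩
  · rw [← card_image_of_injOn hSinj]
    simpa using htcard
  · simpa using innerDual_eq_bot_iff_forall_norm_eq_one.1 ht

/-- If the open hemispheres `{x ∈ S² | ⟪ν i, x⟫ < 0}` cover the unit sphere,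
then at most six of them already cover the sphere. -/
theorem six_hemispheres_cover (n : ℕ) (ν : Fin n → EuclideanSpace ℝ (Fin 3))
    (hν : ∀ i, ν i ≠ 0)
    (hcover : ∀ x : EuclideanSpace ℝ (Fin 3), ‖x‖ = 1 → ∃ i, ⟪ν i, x⟫ < 0) :
    ∃ S : Finset (Fin n), S.card ≤ 6 ∧
      ∀ x : EuclideanSpace ℝ (Fin 3), ‖x‖ = 1 → ∃ i ∈ S, ⟪ν i, x⟫ < 0 :=
  six_hemispheres_cover_general n ν hcover
end

section
/- Let P = ∩_{i=1}^{n} {x ∈ ℝ³ : ⟪νᵢ, x⟫ ≥ cᵢ} be a bounded convex polytope with nonempty interior, where each νᵢ is a unit vector. Then the number of indices i for which there exists d ∈ S² with ⟪νᵢ, d⟫ < 0 and ⟪ν_j, d⟫ ≥ 0 for all j ≠ i is at most six. -/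
/-!
Since `P` is bounded and nonempty, the normals `ν i` positively span the space: every vector is a
nonnegative combination of them. If `d` witnesses that `i` is a valid top facet, then `ν i` occurs
in every nonnegative combination equal to a vector `x` with `⟪x, d⟫ < 0`. Choosing `x` off all the
planes `dᵢᗮ`, every valid index occurs in a combination for `x` or in one for `-x`, and by the conic
Carathéodory theorem each of these needs at most three normals.
-/

open scoped RealInnerProductSpace
open Finset Module Metric

section ConicCaratheodory

variable {ι 𝕜 M : Type*} [Field 𝕜] [LinearOrder 𝕜] [IsStrictOrderedRing 𝕜]
  [AddCommGroup M] [Module 𝕜 M]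

theorem exists_mem_sum_erase_smul_eq_of_not_linearIndepOn [DecidableEq ι] {v : ι → M}
    {s : Finset ι} {μ : ι → 𝕜} (hμ : ∀ i ∈ s, 0 ≤ μ i) (hs : ¬LinearIndepOn 𝕜 v s) :
    ∃ j ∈ s, ∃ μ' : ι → 𝕜, (∀ i ∈ s.erase j, 0 ≤ μ' i) ∧
      ∑ i ∈ s.erase j, μ' i • v i = ∑ i ∈ s, μ i • v i := by
  obtain ⟨g, hg, hg_pos⟩ : ∃ g : ι → 𝕜, ∑ i ∈ s, g i • v i = 0 ∧ ∃ i ∈ s, 0 < g i := by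
    obtain ⟨g, hg, i, hi, hgi⟩ := not_linearIndepOn_finset_iff.1 hs
    rcases hgi.lt_or_gt with hneg | hpos
    · exact ⟨-g, by simp [hg], i, hi, by simpa using hneg⟩
    · exact ⟨g, hg, i, hi, hpos⟩
  obtain ⟨j, hj, hj_min⟩ := (s.filter (0 < g ·)).exists_min_image (fun i => μ i / g i)
    (by simpa [Finset.Nonempty] using hg_pos)
  rw [Finset.mem_filter] at hj
  -- Moving along the relation `g` until the first coefficient vanishes keeps the rest nonnegative.
  set ε := μ j / g j
  refine ⟨j, hj.1, fun i => μ i - ε * g i, fun i hi => ?_, ?_⟩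
  · have hi := Finset.mem_of_mem_erase hi
    rcases le_or_gt (g i) 0 with hgi | hgi
    · have := mul_nonpos_of_nonneg_of_nonpos (div_nonneg (hμ j hj.1) hj.2.le) hgi
      linarith [hμ i hi]
    · have := (le_div_iff₀ hgi).1 (hj_min i (Finset.mem_filter.2 ⟨hi, hgi⟩))
      linarith
  · have hj0 : (μ j - ε * g j) • v j = 0 := by simp [ε, hj.2.ne']
    rw [Finset.sum_erase s hj0]
    simp [sub_smul, mul_smul, Finset.sum_sub_distrib, ← Finset.smul_sum, hg]

theorem exists_subset_linearIndepOn_sum_smul_eq (v : ι → M) (s : Finset ι) (μ : ι → 𝕜)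
    (hμ : ∀ i ∈ s, 0 ≤ μ i) :
    ∃ t ⊆ s, LinearIndepOn 𝕜 v t ∧ ∃ μ' : ι → 𝕜, (∀ i ∈ t, 0 ≤ μ' i) ∧
      ∑ i ∈ t, μ' i • v i = ∑ i ∈ s, μ i • v i := by
  classical
  induction s using Finset.strongInduction generalizing μ with
  | H s ih =>
    by_cases hs : LinearIndepOn 𝕜 v s
    · exact ⟨s, subset_rfl, hs, μ, hμ, rfl⟩
    obtain ⟨j, hj, μ', hμ', hsum⟩ := exists_mem_sum_erase_smul_eq_of_not_linearIndepOn hμ hs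
    obtain ⟨t, hts, ht, μ'', hμ'', hsum'⟩ := ih _ (Finset.erase_ssubset hj) μ' hμ'
    exact ⟨t, hts.trans (Finset.erase_subset _ _), ht, μ'', hμ'', hsum'.trans hsum⟩

theorem exists_subset_card_le_finrank_sum_smul_eq [Module.Finite 𝕜 M] (v : ι → M)
    (s : Finset ι) (μ : ι → 𝕜) (hμ : ∀ i ∈ s, 0 ≤ μ i) :
    ∃ t ⊆ s, #t ≤ finrank 𝕜 M ∧ ∃ μ' : ι → 𝕜, (∀ i ∈ t, 0 ≤ μ' i) ∧
      ∑ i ∈ t, μ' i • v i = ∑ i ∈ s, μ i • v i := by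
  obtain ⟨t, hts, ht, hrest⟩ := exists_subset_linearIndepOn_sum_smul_eq v s μ hμ
  refine ⟨t, hts, ?_, hrest⟩
  simpa using ht.fintype_card_le_finrank

end ConicCaratheodory

section PositiveSpanning

variable {ι E : Type*} [NormedAddCommGroup E] [InnerProductSpace ℝ E]

theorem exists_pos_forall_exists_inner_le [Fintype ι] [FiniteDimensional ℝ E] [Nontrivial E]
    (v : ι → E) (hv : ∀ u ≠ 0, ∃ i, ⟪v i, u⟫ < 0) :
    ∃ δ > 0, ∀ u, ∃ i, ⟪v i, u⟫ ≤ -(δ * ‖u‖) := by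
  obtain ⟨i₀, -⟩ := hv _ (exists_ne (0 : E)).choose_spec
  have hne : (univ : Finset ι).Nonempty := ⟨i₀, mem_univ _⟩
  set m : E → ℝ := fun u => univ.inf' hne fun i => ⟪v i, u⟫
  have hm : Continuous m :=
    Continuous.finset_inf'_apply hne fun i _ => continuous_const.inner continuous_id
  obtain ⟨u₀, hu₀, hmax⟩ := (isCompact_sphere (0 : E) 1).exists_isMaxOn
    (NormedSpace.sphere_nonempty.2 zero_le_one) hm.continuousOn
  have hu₀' : u₀ ≠ 0 := ne_zero_of_mem_unit_sphere ⟨u₀, hu₀⟩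
  obtain ⟨i, hi⟩ := hv u₀ hu₀'
  refine ⟨-m u₀, by linarith [Finset.inf'_le (fun i => ⟪v i, u₀⟫) (mem_univ i)], fun u => ?_⟩
  rcases eq_or_ne u 0 with rfl | hu
  · exact ⟨i₀, by simp⟩
  have hu_norm : 0 < ‖u‖ := norm_pos_iff.2 hu
  obtain ⟨j, -, hj⟩ := Finset.exists_mem_eq_inf' hne fun i => ⟪v i, ‖u‖⁻¹ • u⟫
  have hle : ⟪v j, ‖u‖⁻¹ • u⟫ ≤ m u₀ := hj ▸ hmax (by simp [norm_smul, hu_norm.ne'])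
  rw [real_inner_smul_right, inv_mul_le_iff₀ hu_norm] at hle
  exact ⟨j, by linarith⟩

theorem exists_ball_subset_image_stdSimplex [Fintype ι] [FiniteDimensional ℝ E] [Nontrivial E]
    (v : ι → E) (hv : ∀ u ≠ 0, ∃ i, ⟪v i, u⟫ < 0) :
    ∃ δ > 0, ball 0 δ ⊆ Fintype.linearCombination ℝ v '' stdSimplex ℝ ι := by
  classical
  obtain ⟨δ, hδ, hvδ⟩ := exists_pos_forall_exists_inner_le v hv
  refine ⟨δ, hδ, fun y hy => ?_⟩
  by_contra hyC
  obtain ⟨f, s, hfy, hfC⟩ := geometric_hahn_banach_point_closed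
    ((convex_stdSimplex ℝ ι).linear_image _)
    ((isCompact_stdSimplex ℝ ι).image (LinearMap.continuous_of_finiteDimensional _)).isClosed hyC
  set w := (InnerProductSpace.toDual ℝ E).symm f
  have hw : ∀ z, f z = ⟪w, z⟫ := fun z => InnerProductSpace.toDual_symm_apply.symm
  obtain ⟨i, hi⟩ := hvδ w
  have hvi : s < f (v i) := hfC _ ⟨Pi.single i 1, single_mem_stdSimplex ℝ i, by simp⟩
  have hy_le : -(‖w‖ * ‖y‖) ≤ ⟪w, y⟫ := neg_le_of_abs_le (abs_real_inner_le_norm w y)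
  have : ‖w‖ * ‖y‖ ≤ δ * ‖w‖ := by
    rw [mul_comm]; exact mul_le_mul_of_nonneg_right (mem_ball_zero_iff.1 hy).le (norm_nonneg w)
  rw [hw, real_inner_comm] at hvi
  rw [hw] at hfy
  linarith

theorem exists_nonneg_sum_smul_eq_of_forall_exists_inner_neg [Fintype ι]
    [FiniteDimensional ℝ E] (v : ι → E) (hv : ∀ u ≠ 0, ∃ i, ⟪v i, u⟫ < 0) (x : E) :
    ∃ μ : ι → ℝ, (∀ i, 0 ≤ μ i) ∧ ∑ i, μ i • v i = x := by
  rcases subsingleton_or_nontrivial E with hE | hE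
  · exact ⟨0, fun _ => le_rfl, Subsingleton.elim _ _⟩
  rcases eq_or_ne x 0 with rfl | hx
  · exact ⟨0, fun _ => le_rfl, by simp⟩
  obtain ⟨δ, hδ, hball⟩ := exists_ball_subset_image_stdSimplex v hv
  set t := δ / (2 * ‖x‖) with ht_def
  have ht : 0 < t := by positivity
  have htx : t • x ∈ ball 0 δ := by
    rw [mem_ball_zero_iff, norm_smul, Real.norm_of_nonneg ht.le, ht_def]
    field_simp
    linarith
  obtain ⟨μ, hμ, hμx⟩ := hball htx
  refine ⟨t⁻¹ • μ, fun i => mul_nonneg (inv_nonneg.2 ht.le) (hμ.1 i), ?_⟩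
  rw [Fintype.linearCombination_apply] at hμx
  simp [mul_smul, ← Finset.smul_sum, hμx, ht.ne']

theorem mem_of_inner_sum_smul_neg {v : ι → E} {t : Finset ι} {μ : ι → ℝ}
    (hμ : ∀ j ∈ t, 0 ≤ μ j) {i : ι} {d : E} (hd : ∀ j ≠ i, 0 ≤ ⟪v j, d⟫)
    (hneg : ⟪∑ j ∈ t, μ j • v j, d⟫ < 0) : i ∈ t := by
  by_contra hi
  rw [sum_inner] at hneg
  refine hneg.not_ge (Finset.sum_nonneg fun j hj => ?_)
  rw [real_inner_smul_left]
  exact mul_nonneg (hμ j hj) (hd j (ne_of_mem_of_not_mem hj hi))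

theorem ncard_setOf_exists_inner_neg_le_two_mul_finrank [Fintype ι] [FiniteDimensional ℝ E]
    (v : ι → E) (hv : ∀ u ≠ 0, ∃ i, ⟪v i, u⟫ < 0) :
    {i | ∃ d, ⟪v i, d⟫ < 0 ∧ ∀ j ≠ i, 0 ≤ ⟪v j, d⟫}.ncard ≤ 2 * finrank ℝ E := by
  classical
  set T := {i | ∃ d, ⟪v i, d⟫ < 0 ∧ ∀ j ≠ i, 0 ≤ ⟪v j, d⟫}
  choose d hd using fun i : T => i.2
  have hd0 (i : T) : d i ≠ 0 := fun h => by simpa [h] using (hd i).1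
  obtain ⟨x, hx⟩ := Module.Dual.exists_forall_ne_zero_of_forall_exists
    (fun i : T => innerₛₗ ℝ (d i)) fun i => ⟨d i, (real_inner_self_pos.2 (hd0 i)).ne'⟩
  have hsupport (y : E) : ∃ t : Finset ι, #t ≤ finrank ℝ E ∧
      ∀ i : T, ⟪y, d i⟫ < 0 → (i : ι) ∈ t := by
    obtain ⟨μ, hμ, rfl⟩ := exists_nonneg_sum_smul_eq_of_forall_exists_inner_neg v hv y
    obtain ⟨t, -, ht, μ', hμ', hsum⟩ :=
      exists_subset_card_le_finrank_sum_smul_eq v univ μ fun i _ => hμ i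
    exact ⟨t, ht, fun i hi => mem_of_inner_sum_smul_neg hμ' (hd i).2 (hsum ▸ hi)⟩
  obtain ⟨t₁, ht₁, hx₁⟩ := hsupport x
  obtain ⟨t₂, ht₂, hx₂⟩ := hsupport (-x)
  calc T.ncard ≤ (t₁ ∪ t₂ : Set ι).ncard := by
        refine Set.ncard_le_ncard (fun i hi => ?_) (Set.toFinite _)
        rcases (hx ⟨i, hi⟩).lt_or_gt with h | h
        · exact Or.inl (hx₁ ⟨i, hi⟩ (by rwa [real_inner_comm]))
        · exact Or.inr (hx₂ ⟨i, hi⟩ (by rw [inner_neg_left, real_inner_comm]; simpa using h))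
    _ ≤ #t₁ + #t₂ := by
        rw [← Finset.coe_union, Set.ncard_coe_finset]; exact Finset.card_union_le _ _
    _ ≤ 2 * finrank ℝ E := by omega

theorem exists_inner_neg_of_isBounded_iInter {ν : ι → E} {c : ι → ℝ}
    (hbd : Bornology.IsBounded (⋂ i, {x | c i ≤ ⟪ν i, x⟫}))
    (hne : (⋂ i, {x | c i ≤ ⟪ν i, x⟫}).Nonempty) {u : E} (hu : u ≠ 0) :
    ∃ i, ⟪ν i, u⟫ < 0 := by
  by_contra! h
  obtain ⟨x₀, hx₀⟩ := hne
  have hray (t : ℝ) (ht : 0 ≤ t) : x₀ + t • u ∈ ⋂ i, {x | c i ≤ ⟪ν i, x⟫} := by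
    simp only [Set.mem_iInter, Set.mem_ofPred_eq] at hx₀ ⊢
    intro i
    rw [inner_add_right, real_inner_smul_right]
    nlinarith [hx₀ i, h i]
  obtain ⟨C, hC⟩ := isBounded_iff_forall_norm_le.1 hbd
  have hu' : 0 < ‖u‖ := norm_pos_iff.2 hu
  set t := (C + ‖x₀‖ + 1) / ‖u‖ with ht_def
  have ht : 0 ≤ t := div_nonneg (by linarith [hC x₀ hx₀, norm_nonneg x₀]) hu'.le
  have := calc ‖t • u‖ = ‖(x₀ + t • u) - x₀‖ := by rw [add_sub_cancel_left]
    _ ≤ ‖x₀ + t • u‖ + ‖x₀‖ := norm_sub_le _ _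
    _ ≤ C + ‖x₀‖ := by linarith [hC _ (hray t ht)]
  rw [norm_smul, Real.norm_of_nonneg ht, ht_def, div_mul_cancel₀ _ hu'.ne'] at this
  linarith

end PositiveSpanning

theorem at_most_six_valid_top_facets_general (n : ℕ)
    (ν : Fin n → EuclideanSpace ℝ (Fin 3)) (c : Fin n → ℝ)
    (P : Set (EuclideanSpace ℝ (Fin 3)))
    (hP : P = ⋂ i, {x | c i ≤ ⟪ν i, x⟫})
    (hbd : Bornology.IsBounded P) (hint : (interior P).Nonempty) :
    Set.ncard {i : Fin n | ∃ d : EuclideanSpace ℝ (Fin 3), ‖d‖ = 1 ∧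
      ⟪ν i, d⟫ < 0 ∧ ∀ j, j ≠ i → 0 ≤ ⟪ν j, d⟫} ≤ 6 := by
  subst hP
  have hspan (u) (hu : u ≠ 0) : ∃ i, ⟪ν i, u⟫ < 0 :=
    exists_inner_neg_of_isBounded_iInter hbd (hint.mono interior_subset) hu
  calc _ ≤ {i | ∃ d, ⟪ν i, d⟫ < 0 ∧ ∀ j ≠ i, 0 ≤ ⟪ν j, d⟫}.ncard :=
        Set.ncard_le_ncard (Set.ofPred_subset_ofPred.2 fun _ ⟨d, _, hd⟩ ↦ ⟨d, hd⟩) (Set.toFinite _)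
    _ ≤ 2 * finrank ℝ (EuclideanSpace ℝ (Fin 3)) :=
      ncard_setOf_exists_inner_neg_le_two_mul_finrank ν hspan
    _ = 6 := by simp

/-- A bounded convex polytope has at most six valid top facets. -/
theorem at_most_six_valid_top_facets (n : ℕ)
    (ν : Fin n → EuclideanSpace ℝ (Fin 3)) (c : Fin n → ℝ) (hν : ∀ i, ‖ν i‖ = 1)
    (P : Set (EuclideanSpace ℝ (Fin 3)))
    (hP : P = ⋂ i, {x | c i ≤ ⟪ν i, x⟫})
    (hbd : Bornology.IsBounded P) (hint : (interior P).Nonempty) :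
    Set.ncard {i : Fin n | ∃ d : EuclideanSpace ℝ (Fin 3), ‖d‖ = 1 ∧
      ⟪ν i, d⟫ < 0 ∧ ∀ j, j ≠ i → 0 ≤ ⟪ν j, d⟫} ≤ 6 :=
  at_most_six_valid_top_facets_general n ν c P hP hbd hint
end

section
/- Let P be a bounded convex polytope in ℝ³ with facets F₁, …, Fₙ and inner normals ν₁, …, νₙ, and fix an index i. A direction d ∈ S² satisfies ⟪νᵢ, d⟫ < 0 and ⟪ν_j, d⟫ ≥ 0 for all j ≠ i if and only if it satisfies ⟪νᵢ, d⟫ < 0 and ⟪ν_j, d⟫ ≥ 0 for all facets F_j that share an edge with Fᵢ. -/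
/-!
Suppose `⟪ν k, d⟫ < 0` for some `k ≠ i`. Choose `ρ ≠ 0` orthogonal to `d` and to the segment
joining the centroids of noncollinear triangles in `F i` and `F k`; since `ρ` is not constant on
either facet, a whole interval of the parallel planes `⟪ρ, ·⟫ = r` (all containing `d`) meets
both `F i` and `F k`. In each such plane, walk from a point `p ∈ F i` along `F i` towards a point
`q ∈ F k`: either `q` itself lies on `F i`, or the walk leaves `P` through some `F j`, `j ≠ i`,
and `q` lies beyond that exit point only if `⟪ν j, d⟫ < 0`. Infinitely many planes but finitely
many facets, so one such `F j` meets `F i` in two distinct points: it is an edge-neighbour of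
`F i` violating the condition.
-/

open scoped RealInnerProductSpace
open Set Module

variable {E : Type*} [NormedAddCommGroup E] [InnerProductSpace ℝ E] {ι : Type*}

def polyhedron (ν : ι → E) (c : ι → ℝ) : Set E := ⋂ j, {x | c j ≤ ⟪ν j, x⟫}

def polyhedronFace (ν : ι → E) (c : ι → ℝ) (j : ι) : Set E :=
  {x ∈ polyhedron ν c | ⟪ν j, x⟫ = c j}

section Polyhedron

variable {ν : ι → E} {c : ι → ℝ}

@[simp]
theorem mem_polyhedron {x : E} : x ∈ polyhedron ν c ↔ ∀ j, c j ≤ ⟪ν j, x⟫ :=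
  mem_iInter

theorem convex_polyhedronFace (j : ι) : Convex ℝ (polyhedronFace ν c j) :=
  (convex_iInter fun l => convex_halfSpace_ge (innerₛₗ ℝ (ν l)).isLinear (c l)).inter
    (convex_hyperplane (innerₛₗ ℝ (ν j)).isLinear (c j))

theorem exists_add_smul_mem_polyhedronFace_of_add_notMem [Finite ι] {p τ : E}
    (hp : p ∈ polyhedron ν c) (hpτ : p + τ ∉ polyhedron ν c) :
    ∃ j, ⟪ν j, τ⟫ < 0 ∧ ∃ t : ℝ, t < 1 ∧ p + t • τ ∈ polyhedronFace ν c j := by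
  rw [mem_polyhedron] at hp
  obtain ⟨l, hl⟩ : ∃ l, ⟪ν l, p + τ⟫ < c l := by simpa using hpτ
  rw [inner_add_right] at hl
  have hlτ : ⟪ν l, τ⟫ < 0 := by linarith [hp l]
  -- ratio test: the first constraint met when walking from `p` along `τ`
  let ratio l := (c l - ⟪ν l, p⟫) / ⟪ν l, τ⟫
  have hratio l (hl : ⟪ν l, τ⟫ < 0) : ratio l * ⟪ν l, τ⟫ = c l - ⟪ν l, p⟫ :=
    div_mul_cancel₀ _ hl.ne
  obtain ⟨j, hjτ, hmin⟩ := exists_min_image {l | ⟪ν l, τ⟫ < 0} ratio (toFinite _) ⟨l, hlτ⟩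
  have hj0 : 0 ≤ ratio j := div_nonneg_of_nonpos (by linarith [hp j]) hjτ.le
  refine ⟨j, hjτ, ratio j, (hmin l hlτ).trans_lt ((div_lt_one_of_neg hlτ).2 (by linarith)),
    mem_polyhedron.2 fun m => ?_, ?_⟩
  · rw [inner_add_right, real_inner_smul_right]
    by_cases hm : ⟪ν m, τ⟫ < 0
    · nlinarith [hratio m hm, hmin m hm]
    · nlinarith [hp m]
  · rw [inner_add_right, real_inner_smul_right, hratio j hjτ]
    ring

theorem exists_mem_polyhedronFace_inter_of_inner_neg [Finite ι] {i k : ι} {p q d ρ : E}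
    (hp : p ∈ polyhedronFace ν c i) (hq : q ∈ polyhedronFace ν c k) (hki : k ≠ i)
    (hdi : ⟪ν i, d⟫ < 0) (hdk : ⟪ν k, d⟫ < 0) (hρd : ⟪ρ, d⟫ = 0) (hρpq : ⟪ρ, p⟫ = ⟪ρ, q⟫) :
    ∃ j, j ≠ i ∧ ⟪ν j, d⟫ < 0 ∧
      ∃ v ∈ polyhedronFace ν c i ∩ polyhedronFace ν c j, ⟪ρ, v⟫ = ⟪ρ, p⟫ := by
  obtain ⟨hpP, hpi⟩ := hp
  obtain ⟨hqP, hqk⟩ := hq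
  -- `q - p = τ + β • d` with `τ` parallel to the face `i`
  set β := ⟪ν i, q - p⟫ / ⟪ν i, d⟫ with hβ_def
  set τ := q - p - β • d with hτ_def
  have hβ : β ≤ 0 := by
    refine div_nonpos_of_nonneg_of_nonpos ?_ hdi.le
    rw [inner_sub_right, hpi]
    exact sub_nonneg.2 (mem_polyhedron.1 hqP i)
  have hτ {w : E} : ⟪w, τ⟫ = ⟪w, q⟫ - ⟪w, p⟫ - β * ⟪w, d⟫ := by
    rw [hτ_def, inner_sub_right, inner_sub_right, real_inner_smul_right]
  have hτi : ⟪ν i, τ⟫ = 0 := by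
    rw [hτ, hβ_def, div_mul_cancel₀ _ hdi.ne, inner_sub_right]
    ring
  by_cases hτP : p + τ ∈ polyhedron ν c
  · -- `p + τ = q - β • d`, so the constraint `k` forces `β = 0` and `q ∈ F i`
    have hk := mem_polyhedron.1 hτP k
    rw [inner_add_right, hτ, hqk] at hk
    have hβ0 : β = 0 := le_antisymm hβ (by nlinarith)
    refine ⟨k, hki, hdk, q, ⟨⟨hqP, ?_⟩, hqP, hqk⟩, hρpq.symm⟩
    have := hτ (w := ν i)
    rw [hτi, hβ0, hpi] at this
    linarith
  · obtain ⟨j, hjτ, t, ht, hvP, hvj⟩ :=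
      exists_add_smul_mem_polyhedronFace_of_add_notMem hpP hτP
    have hv {w : E} : ⟪w, p + t • τ⟫ = ⟪w, p⟫ + t * ⟪w, τ⟫ := by
      rw [inner_add_right, real_inner_smul_right]
    refine ⟨j, fun hji => by simp [hji, hτi] at hjτ, ?_, p + t • τ, ⟨⟨hvP, ?_⟩, hvP, hvj⟩, ?_⟩
    · -- `q - (p + t • τ) = (1 - t) • τ + β • d` with `⟪ν j, τ⟫ < 0`
      have hj := mem_polyhedron.1 hqP j
      rw [hv] at hvj
      nlinarith [hτ (w := ν j)]
    · rw [hv, hτi, hpi, mul_zero, add_zero]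
    · rw [hv, hτ, hρd, hρpq]
      ring

end Polyhedron

theorem mem_orthogonal_vectorSpan_of_inner_eq {s : Set E} {ρ : E} {b : ℝ}
    (h : ∀ x ∈ s, ⟪ρ, x⟫ = b) : ρ ∈ (vectorSpan ℝ s)ᗮ := by
  have : vectorSpan ℝ s ≤ (ℝ ∙ ρ)ᗮ := by
    rw [vectorSpan_def, Submodule.span_le]
    rintro _ ⟨x, hx, y, hy, rfl⟩
    show x - y ∈ (ℝ ∙ ρ)ᗮ
    rw [Submodule.mem_orthogonal_singleton_iff_inner_right, inner_sub_right, h x hx, h y hy,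
      sub_self]
  exact (Submodule.mem_orthogonal _ _).2 fun u hu =>
    real_inner_comm u ρ ▸ Submodule.mem_orthogonal_singleton_iff_inner_right.1 (this hu)

theorem eq_zero_of_inner_eq_of_not_collinear [FiniteDimensional ℝ E] (hE : finrank ℝ E ≤ 3)
    {s : Set E} (hs : ¬ Collinear ℝ s) {ν ρ d : E} {a b : ℝ}
    (hν : ∀ x ∈ s, ⟪ν, x⟫ = a) (hρ : ∀ x ∈ s, ⟪ρ, x⟫ = b)
    (hνd : ⟪ν, d⟫ ≠ 0) (hρd : ⟪ρ, d⟫ = 0) : ρ = 0 := by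
  rw [collinear_iff_finrank_le_one] at hs
  set W := vectorSpan ℝ s
  have hWperp : finrank ℝ Wᗮ ≤ 1 := by
    have := W.finrank_add_finrank_orthogonal
    omega
  by_contra hρ0
  have hspan : (ℝ ∙ ρ) = Wᗮ :=
    Submodule.eq_of_le_of_finrank_le
      ((Submodule.span_singleton_le_iff_mem _ _).2 (mem_orthogonal_vectorSpan_of_inner_eq hρ))
      (by rwa [finrank_span_singleton hρ0])
  obtain ⟨l, rfl⟩ := Submodule.mem_span_singleton.1
    (hspan ▸ mem_orthogonal_vectorSpan_of_inner_eq hν)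
  simp [real_inner_smul_left, hρd] at hνd

theorem exists_ne_zero_inner_eq_zero_inner_eq_zero [FiniteDimensional ℝ E]
    (hE : 3 ≤ finrank ℝ E) (u d : E) : ∃ ρ : E, ρ ≠ 0 ∧ ⟪ρ, u⟫ = 0 ∧ ⟪ρ, d⟫ = 0 := by
  set W := Submodule.span ℝ (range ![u, d])
  have hW : finrank ℝ W ≤ 2 := (finrank_range_le_card _).trans (by simp)
  have hWperp : Wᗮ ≠ ⊥ := by
    intro h
    have := W.finrank_add_finrank_orthogonal
    rw [h, finrank_bot] at this
    omega
  obtain ⟨ρ, hρW, hρ⟩ := Submodule.exists_mem_ne_zero_of_ne_bot hWperp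
  have hmem {w : E} (hw : w ∈ range ![u, d]) : ⟪ρ, w⟫ = 0 := by
    rw [real_inner_comm]
    exact Submodule.inner_right_of_mem_orthogonal (Submodule.subset_span hw) hρW
  exact ⟨ρ, hρ, hmem ⟨0, rfl⟩, hmem ⟨1, rfl⟩⟩

theorem Convex.inv_three_smul_add_add_mem {F : Set E} (hF : Convex ℝ F) {x y z : E}
    (hx : x ∈ F) (hy : y ∈ F) (hz : z ∈ F) : (3 : ℝ)⁻¹ • (x + y + z) ∈ F := by
  have : (3 : ℝ)⁻¹ • (x + y + z) =
      (3 : ℝ)⁻¹ • x + (2 / 3 : ℝ) • ((2 : ℝ)⁻¹ • y + (2 : ℝ)⁻¹ • z) := by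
    module
  rw [this]
  exact hF hx (hF hy hz (by norm_num) (by norm_num) (by norm_num)) (by norm_num) (by norm_num)
    (by norm_num)

theorem exists_inner_lt_of_not_collinear [FiniteDimensional ℝ E] (hE : finrank ℝ E ≤ 3)
    {x y z ν ρ d : E} {a : ℝ} (hxyz : ¬ Collinear ℝ {x, y, z})
    (hx : ⟪ν, x⟫ = a) (hy : ⟪ν, y⟫ = a) (hz : ⟪ν, z⟫ = a)
    (hνd : ⟪ν, d⟫ ≠ 0) (hρd : ⟪ρ, d⟫ = 0) (hρ : ρ ≠ 0) :
    ∃ w ∈ ({x, y, z} : Set E), ⟪ρ, (3 : ℝ)⁻¹ • (x + y + z)⟫ < ⟪ρ, w⟫ := by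
  by_contra! h
  simp only [mem_insert_iff, mem_singleton_iff, forall_eq_or_imp, forall_eq,
    real_inner_smul_right, inner_add_right] at h
  refine hρ (eq_zero_of_inner_eq_of_not_collinear hE hxyz (a := a) (b := ⟪ρ, x⟫) ?_ ?_ hνd hρd)
  · simp [hx, hy, hz]
  · simp only [mem_insert_iff, mem_singleton_iff, forall_eq_or_imp, forall_eq, true_and]
    constructor <;> linarith

theorem exists_inner_neg_polyhedronFace_inter_nontrivial [Finite ι] [FiniteDimensional ℝ E]
    (hE : finrank ℝ E = 3) {ν : ι → E} {c : ι → ℝ} {i k : ι} {d : E}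
    (hi : ∃ x ∈ polyhedronFace ν c i, ∃ y ∈ polyhedronFace ν c i, ∃ z ∈ polyhedronFace ν c i,
      ¬ Collinear ℝ {x, y, z})
    (hk : ∃ x ∈ polyhedronFace ν c k, ∃ y ∈ polyhedronFace ν c k, ∃ z ∈ polyhedronFace ν c k,
      ¬ Collinear ℝ {x, y, z})
    (hki : k ≠ i) (hdi : ⟪ν i, d⟫ < 0) (hdk : ⟪ν k, d⟫ < 0) :
    ∃ j, j ≠ i ∧ ⟪ν j, d⟫ < 0 ∧ (polyhedronFace ν c i ∩ polyhedronFace ν c j).Nontrivial := by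
  obtain ⟨x, hx, y, hy, z, hz, hxyz⟩ := hi
  obtain ⟨x', hx', y', hy', z', hz', hxyz'⟩ := hk
  set x₀ := (3 : ℝ)⁻¹ • (x + y + z)
  set y₀ := (3 : ℝ)⁻¹ • (x' + y' + z')
  have hx₀ : x₀ ∈ polyhedronFace ν c i :=
    (convex_polyhedronFace i).inv_three_smul_add_add_mem hx hy hz
  have hy₀ : y₀ ∈ polyhedronFace ν c k :=
    (convex_polyhedronFace k).inv_three_smul_add_add_mem hx' hy' hz'
  obtain ⟨ρ, hρ, hρu, hρd⟩ := exists_ne_zero_inner_eq_zero_inner_eq_zero hE.ge (y₀ - x₀) d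
  have hρ₀ : ⟪ρ, x₀⟫ = ⟪ρ, y₀⟫ := by
    rw [inner_sub_right] at hρu
    linarith
  obtain ⟨a, ha, hx₀a⟩ :=
    exists_inner_lt_of_not_collinear hE.le hxyz hx.2 hy.2 hz.2 hdi.ne hρd hρ
  obtain ⟨b, hb, hy₀b⟩ :=
    exists_inner_lt_of_not_collinear hE.le hxyz' hx'.2 hy'.2 hz'.2 hdk.ne hρd hρ
  have haF : a ∈ polyhedronFace ν c i := by obtain rfl | rfl | rfl := ha <;> assumption
  have hbF : b ∈ polyhedronFace ν c k := by obtain rfl | rfl | rfl := hb <;> assumption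
  let faceMeet j := {v ∈ polyhedronFace ν c i ∩ polyhedronFace ν c j | j ≠ i ∧ ⟪ν j, d⟫ < 0}
  have hlevels : Icc ⟪ρ, x₀⟫ (min ⟪ρ, a⟫ ⟪ρ, b⟫) ⊆ (fun v => ⟪ρ, v⟫) '' ⋃ j, faceMeet j := by
    rintro r ⟨hr₀, hr₁⟩
    have hcont : Continuous fun v : E => ⟪ρ, v⟫ := continuous_const.inner continuous_id
    obtain ⟨p, hp, rfl⟩ := (convex_polyhedronFace i).isPreconnected.intermediate_value
      hx₀ haF hcont.continuousOn ⟨hr₀, hr₁.trans (min_le_left _ _)⟩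
    obtain ⟨q, hq, hqr⟩ := (convex_polyhedronFace k).isPreconnected.intermediate_value
      hy₀ hbF hcont.continuousOn ⟨hρ₀ ▸ hr₀, hr₁.trans (min_le_right _ _)⟩
    obtain ⟨j, hji, hdj, v, hv, hvp⟩ :=
      exists_mem_polyhedronFace_inter_of_inner_neg hp hq hki hdi hdk hρd hqr.symm
    exact ⟨v, mem_iUnion.2 ⟨j, hv, hji, hdj⟩, hvp⟩
  have hinf : (⋃ j, faceMeet j).Infinite :=
    ((Icc_infinite (lt_min hx₀a (hρ₀ ▸ hy₀b))).mono hlevels).of_image _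
  obtain ⟨j, hj⟩ : ∃ j, (faceMeet j).Infinite := by
    by_contra! h
    exact hinf (finite_iUnion h)
  obtain ⟨v, -, hji, hdj⟩ := hj.nonempty
  exact ⟨j, hji, hdj, hj.nontrivial.mono fun _ h => h.1⟩

theorem valid_iff_valid_on_neighbors_general (n : ℕ)
    (ν : Fin n → EuclideanSpace ℝ (Fin 3)) (c : Fin n → ℝ)
    (P : Set (EuclideanSpace ℝ (Fin 3)))
    (hP : P = ⋂ j, {x | c j ≤ ⟪ν j, x⟫})
    (F : Fin n → Set (EuclideanSpace ℝ (Fin 3)))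
    (hF : ∀ j, F j = {x ∈ P | ⟪ν j, x⟫ = c j})
    (hfacet : ∀ j, ∃ x ∈ F j, ∃ y ∈ F j, ∃ z ∈ F j,
      ¬ Collinear ℝ ({x, y, z} : Set (EuclideanSpace ℝ (Fin 3))))
    (i : Fin n) (d : EuclideanSpace ℝ (Fin 3)) :
    (⟪ν i, d⟫ < 0 ∧ ∀ j, j ≠ i → 0 ≤ ⟪ν j, d⟫) ↔
      (⟪ν i, d⟫ < 0 ∧ ∀ j, j ≠ i →
        (∃ p q, p ≠ q ∧ p ∈ F i ∩ F j ∧ q ∈ F i ∩ F j) → 0 ≤ ⟪ν j, d⟫) := by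
  subst hP
  obtain rfl : F = polyhedronFace ν c := funext hF
  refine ⟨fun ⟨hdi, hvalid⟩ => ⟨hdi, fun j hji _ => hvalid j hji⟩,
    fun ⟨hdi, hvalid⟩ => ⟨hdi, fun k hki => ?_⟩⟩
  by_contra! hdk
  obtain ⟨j, hji, hdj, p, hp, q, hq, hpq⟩ := exists_inner_neg_polyhedronFace_inter_nontrivial
    finrank_euclideanSpace_fin (hfacet i) (hfacet k) hki hdi hdk
  exact (hvalid j hji ⟨p, q, hpq, hp, hq⟩).not_gt hdj

/-- For a bounded convex polytope, direction `d` is a valid pull-out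
direction for facet `F i` iff the half-space conditions hold for the
edge-neighboring facets of `F i` alone. -/
theorem valid_iff_valid_on_neighbors (n : ℕ)
    (ν : Fin n → EuclideanSpace ℝ (Fin 3)) (c : Fin n → ℝ) (hν : ∀ i, ν i ≠ 0)
    (P : Set (EuclideanSpace ℝ (Fin 3)))
    (hP : P = ⋂ j, {x | c j ≤ ⟪ν j, x⟫})
    (hbd : Bornology.IsBounded P) (hint : (interior P).Nonempty)
    (F : Fin n → Set (EuclideanSpace ℝ (Fin 3)))
    (hF : ∀ j, F j = {x ∈ P | ⟪ν j, x⟫ = c j})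
    (hfacet : ∀ j, ∃ x ∈ F j, ∃ y ∈ F j, ∃ z ∈ F j,
      ¬ Collinear ℝ ({x, y, z} : Set (EuclideanSpace ℝ (Fin 3))))
    (i : Fin n) (d : EuclideanSpace ℝ (Fin 3)) (hd : ‖d‖ = 1) :
    (⟪ν i, d⟫ < 0 ∧ ∀ j, j ≠ i → 0 ≤ ⟪ν j, d⟫) ↔
      (⟪ν i, d⟫ < 0 ∧ ∀ j, j ≠ i →
        (∃ p q, p ≠ q ∧ p ∈ F i ∩ F j ∧ q ∈ F i ∩ F j) → 0 ≤ ⟪ν j, d⟫) :=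
  valid_iff_valid_on_neighbors_general n ν c P hP F hF hfacet i d
end

section
/- Let S² be covered by four fixed open hemispheres H₁, H₂, H₃, H₄ and let 𝓕 be a family of open hemispheres covering S². Then there exists a subfamily of 𝓕 of size at most 12 covering S². -/
/-!
A finite subfamily of `𝓕` already covers the sphere, by compactness. Central projection from
the origin maps the open hemisphere `⟪w, x⟫ < 0` onto the affine plane `⟪w, y⟫ = -1`, and
the hemisphere is covered by a subfamily exactly when the complements of its members, traced on
that plane, have empty intersection. These traces are closed half-planes, so by Helly's
theorem in the plane three of them already have empty intersection. Doing this for each of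
the four hemispheres `H_k` gives at most `4 · 3` members of `𝓕`.
-/

open scoped RealInnerProductSpace
open Module Finset

namespace Convex

variable {ι 𝕜 E : Type*} [Field 𝕜] [LinearOrder 𝕜] [IsStrictOrderedRing 𝕜]
  [AddCommGroup E] [Module 𝕜 E] [FiniteDimensional 𝕜 E]

theorem exists_card_le_finrank_add_one_iInter_eq_empty {F : ι → Set E} {s : Finset ι}
    (h_convex : ∀ i ∈ s, Convex 𝕜 (F i)) (h_empty : ⋂ i ∈ s, F i = ∅) :
    ∃ I ⊆ s, #I ≤ finrank 𝕜 E + 1 ∧ ⋂ i ∈ I, F i = ∅ := by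
  by_contra! h
  simpa [h_empty] using helly_theorem' h_convex h

end Convex

section HalfSpaces

variable {ι E : Type*} [NormedAddCommGroup E] [InnerProductSpace ℝ E]

theorem exists_finset_forall_inner_neg_of_norm_eq_one [ProperSpace E] {ν : ι → E}
    (h : ∀ x : E, ‖x‖ = 1 → ∃ i, ⟪ν i, x⟫ < 0) :
    ∃ s : Finset ι, ∀ x : E, ‖x‖ = 1 → ∃ i ∈ s, ⟪ν i, x⟫ < 0 := by
  obtain ⟨s, hs⟩ := (isCompact_sphere (0 : E) 1).elim_finite_subcover
    (fun i => {x | ⟪ν i, x⟫ < 0})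
    (fun i => isOpen_lt (continuous_const.inner continuous_id) continuous_const)
    fun x hx => Set.mem_iUnion.2 (h x (by simpa using hx))
  exact ⟨s, fun x hx => by simpa using hs (by simpa using hx)⟩

theorem exists_inner_neg_of_ne_zero {ν : ι → E} {s : Finset ι}
    (hs : ∀ x : E, ‖x‖ = 1 → ∃ i ∈ s, ⟪ν i, x⟫ < 0) {x : E} (hx : x ≠ 0) :
    ∃ i ∈ s, ⟪ν i, x⟫ < 0 := by
  obtain ⟨i, hi, hneg⟩ := hs (‖x‖⁻¹ • x) (norm_smul_inv_norm hx)
  rw [real_inner_smul_right] at hneg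
  exact ⟨i, hi, neg_of_mul_neg_right hneg (by positivity)⟩

theorem exists_pos_smul_add_eq_of_inner_neg {w c x : E} (hc : ⟪w, c⟫ = -1)
    (hx : ⟪w, x⟫ < 0) : ∃ t : ℝ, 0 < t ∧ ∃ v ∈ (ℝ ∙ w)ᗮ, t • (c + v) = x := by
  refine ⟨-⟪w, x⟫, neg_pos.2 hx, (-⟪w, x⟫)⁻¹ • x - c, ?_, ?_⟩
  · rw [Submodule.mem_orthogonal_singleton_iff_inner_right, inner_sub_right,
      real_inner_smul_right, hc, inv_neg, neg_mul, inv_mul_cancel₀ hx.ne]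
    ring
  · simp [smul_smul, hx.ne]

theorem exists_card_le_finrank_forall_inner_neg [FiniteDimensional ℝ E] (w : E) {ν : ι → E}
    {s : Finset ι} (hs : ∀ x : E, x ≠ 0 → ∃ i ∈ s, ⟪ν i, x⟫ < 0) :
    ∃ I ⊆ s, #I ≤ finrank ℝ E ∧ ∀ x : E, ⟪w, x⟫ < 0 → ∃ i ∈ I, ⟪ν i, x⟫ < 0 := by
  rcases eq_or_ne w 0 with rfl | hw
  · exact ⟨∅, empty_subset s, Nat.zero_le _, by simp⟩
  set V := (ℝ ∙ w)ᗮ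
  set c : E := (-(‖w‖ ^ 2)⁻¹) • w
  have hc : ⟪w, c⟫ = -1 := by
    rw [real_inner_smul_right, real_inner_self_eq_norm_sq]
    field_simp
  have hV : finrank ℝ V + 1 = finrank ℝ E := by
    rw [← (ℝ ∙ w).finrank_add_finrank_orthogonal, finrank_span_singleton hw, add_comm]
  have hplane (v : V) : ⟪w, c + v⟫ = -1 := by
    rw [inner_add_right, hc, Submodule.mem_orthogonal_singleton_iff_inner_right.1 v.2, add_zero]
  let F : ι → Set V := fun i => {v | -⟪ν i, c⟫ ≤ ⟪ν i, (v : E)⟫}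
  have hF_convex : ∀ i ∈ s, Convex ℝ (F i) := fun i _ =>
    convex_halfSpace_ge (f := fun v : V => ⟪ν i, (v : E)⟫)
      ⟨fun _ _ => inner_add_right _ _ _, fun _ _ => real_inner_smul_right _ _ _⟩ _
  have hF_empty : ⋂ i ∈ s, F i = ∅ := by
    refine Set.eq_empty_of_forall_notMem fun v hv => ?_
    obtain ⟨i, hi, hneg⟩ := hs (c + v) fun h0 => by simpa [h0] using hplane v
    have := Set.mem_iInter₂.1 hv i hi
    simp only [F, Set.mem_ofPred_eq] at this
    rw [inner_add_right] at hneg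
    linarith
  obtain ⟨I, hIs, hIcard, hI⟩ := Convex.exists_card_le_finrank_add_one_iInter_eq_empty
    hF_convex hF_empty
  refine ⟨I, hIs, hV ▸ hIcard, fun x hx => ?_⟩
  obtain ⟨t, ht, v, hv, rfl⟩ := exists_pos_smul_add_eq_of_inner_neg hc hx
  have : (⟨v, hv⟩ : V) ∉ ⋂ i ∈ I, F i := hI ▸ Set.notMem_empty _
  simp only [Set.mem_iInter₂, not_forall, F, Set.mem_ofPred_eq, not_le] at this
  obtain ⟨i, hi, hlt⟩ := this
  refine ⟨i, hi, ?_⟩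
  rw [real_inner_smul_right, inner_add_right]
  exact mul_neg_of_pos_of_neg ht (by linarith)

end HalfSpaces

theorem twelve_hemispheres_cover_general {ι : Type*}
    (w : Fin 4 → EuclideanSpace ℝ (Fin 3))
    (hWcover : ∀ x : EuclideanSpace ℝ (Fin 3), ‖x‖ = 1 → ∃ k, ⟪w k, x⟫ < 0)
    (ν : ι → EuclideanSpace ℝ (Fin 3))
    (hcover : ∀ x : EuclideanSpace ℝ (Fin 3), ‖x‖ = 1 → ∃ i, ⟪ν i, x⟫ < 0) :
    ∃ S : Finset ι, S.card ≤ 12 ∧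
      ∀ x : EuclideanSpace ℝ (Fin 3), ‖x‖ = 1 → ∃ i ∈ S, ⟪ν i, x⟫ < 0 := by
  classical
  obtain ⟨s, hs⟩ := exists_finset_forall_inner_neg_of_norm_eq_one hcover
  choose I _ hIcard hIcover using fun k =>
    exists_card_le_finrank_forall_inner_neg (w k) fun x hx => exists_inner_neg_of_ne_zero hs hx
  refine ⟨univ.biUnion I, ?_, fun x hx => ?_⟩
  · calc #(univ.biUnion I) ≤ ∑ k, #(I k) := card_biUnion_le
      _ ≤ ∑ _k : Fin 4, 3 := sum_le_sum fun k _ => by simpa using hIcard k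
      _ = 12 := rfl
  · obtain ⟨k, hk⟩ := hWcover x hx
    obtain ⟨i, hi, hneg⟩ := hIcover k x hk
    exact ⟨i, mem_biUnion.2 ⟨k, mem_univ k, hi⟩, hneg⟩

/-- If S² is covered by four fixed open hemispheres and also by a
family of open hemispheres, then some subfamily of size at most 12 covers S². -/
theorem twelve_hemispheres_cover {ι : Type*}
    (w : Fin 4 → EuclideanSpace ℝ (Fin 3)) (hw : ∀ k, w k ≠ 0)
    (hWcover : ∀ x : EuclideanSpace ℝ (Fin 3), ‖x‖ = 1 → ∃ k, ⟪w k, x⟫ < 0)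
    (ν : ι → EuclideanSpace ℝ (Fin 3)) (hν : ∀ i, ν i ≠ 0)
    (hcover : ∀ x : EuclideanSpace ℝ (Fin 3), ‖x‖ = 1 → ∃ i, ⟪ν i, x⟫ < 0) :
    ∃ S : Finset ι, S.card ≤ 12 ∧
      ∀ x : EuclideanSpace ℝ (Fin 3), ‖x‖ = 1 → ∃ i ∈ S, ⟪ν i, x⟫ < 0 :=
  twelve_hemispheres_cover_general w hWcover ν hcover
end
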